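/- Let G(s) = U + (L - s)·Φ(L - s) - (U - s)·Φ(U - s) + φ(L - s) - φ(U - s) with L < U, and for fixed vectors φₖ, θ*, θ with |⟨φₖ, θ⟩| ≤ M and |⟨φₖ, θ*⟩| ≤ M, define J(θ) = (G(⟨φₖ, θ*⟩) - G(⟨φₖ, θ⟩))². Then ⟨∇J(θ), θ - θ*⟩ ≥ c·J(θ), where c = inf_{|x| ≤ M} (Φ(U - x) - Φ(L - x)) > 0. -/

import Mathlib

open MeasureTheory ProbabilityTheory RealInnerProductSpace

/-- Standard normal cumulative distribution function. -/
noncomputable def stdPhi (x : ℝ) : ℝ := (gaussianReal 0 1 (Set.Iic x)).toReal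

/-- Standard normal probability density function. -/
noncomputable def stdpdf (x : ℝ) : ℝ :=
  (Real.sqrt (2 * Real.pi))⁻¹ * Real.exp (-x ^ 2 / 2)

/-!
Write `s = ⟪φₖ, θ⟫`, `t = ⟪φₖ, θ*⟫` and `p = G'`. Then `⟪∇J(θ), θ - θ*⟫ = 2 (G t - G s) (t - s) p(s)`.
Since `0 ≤ p ≤ 1`, `G` is monotone and `1`-Lipschitz, so `(G t - G s)² ≤ (G t - G s) (t - s)`,
while `p(s) ≥ c` because `|s| ≤ M`. Positivity of `c` is a minimum of a continuous positive
function over a compact interval.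
-/

lemma stdpdf_eq_gaussianPDFReal (x : ℝ) : stdpdf x = gaussianPDFReal 0 1 x := by
  simp [gaussianPDFReal, stdpdf]

lemma stdpdf_pos (x : ℝ) : 0 < stdpdf x := by
  rw [stdpdf_eq_gaussianPDFReal]
  exact gaussianPDFReal_pos 0 1 x one_ne_zero

lemma continuous_stdpdf : Continuous stdpdf := by
  unfold stdpdf
  fun_prop

lemma integrable_stdpdf : Integrable stdpdf := by
  simpa [← funext stdpdf_eq_gaussianPDFReal] using integrable_gaussianPDFReal 0 1

lemma hasDerivAt_stdpdf (x : ℝ) : HasDerivAt stdpdf (-x * stdpdf x) x := by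
  have hexponent : HasDerivAt (fun x : ℝ => -x ^ 2 / 2) (-x) x := by
    simpa using ((hasDerivAt_pow 2 x).neg.div_const 2).congr_deriv (by ring)
  refine (hexponent.exp.const_mul (Real.sqrt (2 * Real.pi))⁻¹).congr_deriv ?_
  unfold stdpdf
  ring

lemma stdPhi_eq_integral (x : ℝ) : stdPhi x = ∫ t in Set.Iic x, stdpdf t := by
  rw [stdPhi, gaussianReal_apply_eq_integral 0 one_ne_zero,
    ENNReal.toReal_ofReal (integral_nonneg fun t => gaussianPDFReal_nonneg 0 1 t)]
  simp_rw [stdpdf_eq_gaussianPDFReal]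

lemma stdPhi_sub_stdPhi (a b : ℝ) : stdPhi b - stdPhi a = ∫ t in a..b, stdpdf t := by
  rw [stdPhi_eq_integral, stdPhi_eq_integral]
  exact intervalIntegral.integral_Iic_sub_Iic integrable_stdpdf.integrableOn
    integrable_stdpdf.integrableOn

lemma hasDerivAt_stdPhi (a : ℝ) : HasDerivAt stdPhi (stdpdf a) a := by
  have hFTC : HasDerivAt (fun x => stdPhi 0 + ∫ t in (0 : ℝ)..x, stdpdf t) (stdpdf a) a :=
    (intervalIntegral.integral_hasDerivAt_right integrable_stdpdf.intervalIntegrable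
      continuous_stdpdf.stronglyMeasurable.stronglyMeasurableAtFilter
      continuous_stdpdf.continuousAt).const_add _
  refine hFTC.congr_of_eventuallyEq (Filter.Eventually.of_forall fun x => ?_)
  simp only [← stdPhi_sub_stdPhi, add_sub_cancel]

lemma continuous_stdPhi : Continuous stdPhi :=
  continuous_iff_continuousAt.2 fun x => (hasDerivAt_stdPhi x).continuousAt

lemma stdPhi_strictMono : StrictMono stdPhi :=
  strictMono_of_hasDerivAt_pos hasDerivAt_stdPhi stdpdf_pos

lemma stdPhi_nonneg (x : ℝ) : 0 ≤ stdPhi x := ENNReal.toReal_nonneg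

lemma stdPhi_le_one (x : ℝ) : stdPhi x ≤ 1 :=
  ENNReal.toReal_le_of_le_ofReal zero_le_one (by simpa using prob_le_one)

/-- The mean of `clamp (s + Z) L U` for `Z` standard normal. -/
noncomputable def saturatedMean (L U s : ℝ) : ℝ :=
  U + (L - s) * stdPhi (L - s) - (U - s) * stdPhi (U - s) + stdpdf (L - s) - stdpdf (U - s)

noncomputable def unsaturatedProb (L U s : ℝ) : ℝ := stdPhi (U - s) - stdPhi (L - s)

lemma unsaturatedProb_pos {L U : ℝ} (hLU : L < U) (s : ℝ) : 0 < unsaturatedProb L U s :=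
  sub_pos.2 (stdPhi_strictMono (by linarith))

lemma unsaturatedProb_le_one (L U s : ℝ) : unsaturatedProb L U s ≤ 1 := by
  unfold unsaturatedProb
  linarith [stdPhi_le_one (U - s), stdPhi_nonneg (L - s)]

lemma continuous_unsaturatedProb (L U : ℝ) : Continuous (unsaturatedProb L U) := by
  have hsub (a : ℝ) : Continuous fun s : ℝ => a - s := continuous_const.sub continuous_id
  exact (continuous_stdPhi.comp (hsub U)).sub (continuous_stdPhi.comp (hsub L))

lemma hasDerivAt_saturatedMean (L U s : ℝ) :
    HasDerivAt (saturatedMean L U) (unsaturatedProb L U s) s := by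
  have hsub (a : ℝ) : HasDerivAt (fun x : ℝ => a - x) (-1) s := by
    simpa using (hasDerivAt_id s).const_sub a
  have hPhi (a : ℝ) := (hasDerivAt_stdPhi (a - s)).comp s (hsub a)
  have hpdf (a : ℝ) := (hasDerivAt_stdpdf (a - s)).comp s (hsub a)
  refine (((((hasDerivAt_const s U).add ((hsub L).mul (hPhi L))).sub
    ((hsub U).mul (hPhi U))).add (hpdf L)).sub (hpdf U)).congr_deriv ?_
  simp only [unsaturatedProb, Function.comp_apply]
  ring

lemma saturatedMean_monotone {L U : ℝ} (hLU : L < U) : Monotone (saturatedMean L U) :=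
  monotone_of_hasDerivAt_nonneg (hasDerivAt_saturatedMean L U)
    fun s => (unsaturatedProb_pos hLU s).le

lemma id_sub_saturatedMean_monotone (L U : ℝ) : Monotone fun s => s - saturatedMean L U s :=
  monotone_of_hasDerivAt_nonneg (fun s => (hasDerivAt_id s).sub (hasDerivAt_saturatedMean L U s))
    fun s => sub_nonneg.2 (unsaturatedProb_le_one L U s)

lemma sq_sub_le_mul_sub {G : ℝ → ℝ} (hG : Monotone G) (hG' : Monotone fun x => x - G x)
    (s t : ℝ) : (G t - G s) ^ 2 ≤ (G t - G s) * (t - s) := by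
  rcases le_total s t with hst | hts
  · have h₀ : 0 ≤ G t - G s := sub_nonneg.2 (hG hst)
    have h₁ : G t - G s ≤ t - s := by linarith [hG' hst]
    nlinarith
  · have h₀ : G t - G s ≤ 0 := sub_nonpos.2 (hG hts)
    have h₁ : t - s ≤ G t - G s := by linarith [hG' hts]
    nlinarith

lemma IsCompact.sInf_image_pos {α : Type*} [TopologicalSpace α] {K : Set α} {f : α → ℝ} (hK : IsCompact K) (hne : K.Nonempty)
    (hf : ContinuousOn f K) (hpos : ∀ x ∈ K, 0 < f x) : 0 < sInf (f '' K) := by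
  obtain ⟨x, hx, hmin⟩ := (hK.image_of_continuousOn hf).sInf_mem (hne.image f)
  exact hmin ▸ hpos x hx

theorem stmt4_general {d : ℕ} (L U M : ℝ) (hLU : L < U) (G : ℝ → ℝ)
    (hG : ∀ s, G s = U + (L - s) * stdPhi (L - s) - (U - s) * stdPhi (U - s)
        + stdpdf (L - s) - stdpdf (U - s))
    (φk θstar θ : EuclideanSpace ℝ (Fin d))
    (hθ : |⟪φk, θ⟫| ≤ M)
    (J : EuclideanSpace ℝ (Fin d) → ℝ)
    (hJ : J = fun ϑ => (G ⟪φk, θstar⟫ - G ⟪φk, ϑ⟫) ^ 2)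
    (gradJ : EuclideanSpace ℝ (Fin d) → EuclideanSpace ℝ (Fin d))
    (hgrad : gradJ = fun ϑ =>
      (-2 * (G ⟪φk, θstar⟫ - G ⟪φk, ϑ⟫) *
        (stdPhi (U - ⟪φk, ϑ⟫) - stdPhi (L - ⟪φk, ϑ⟫))) • φk)
    (c : ℝ)
    (hc : c = sInf ((fun x => stdPhi (U - x) - stdPhi (L - x)) '' Set.Icc (-M) M)) :
    0 < c ∧ ⟪gradJ θ, θ - θstar⟫ ≥ c * J θ := by
  obtain rfl : G = saturatedMean L U := funext hG
  change c = sInf (unsaturatedProb L U '' Set.Icc (-M) M) at hc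
  subst hJ hgrad hc
  set s := ⟪φk, θ⟫
  set t := ⟪φk, θstar⟫
  have hs : s ∈ Set.Icc (-M) M := abs_le.1 hθ
  have hcont := (continuous_unsaturatedProb L U).continuousOn (s := Set.Icc (-M) M)
  refine ⟨isCompact_Icc.sInf_image_pos ⟨s, hs⟩ hcont fun x _ => unsaturatedProb_pos hLU x, ?_⟩
  have hcs : sInf (unsaturatedProb L U '' Set.Icc (-M) M) ≤ unsaturatedProb L U s :=
    csInf_le (isCompact_Icc.image_of_continuousOn hcont).bddBelow (Set.mem_image_of_mem _ hs)
  set D := saturatedMean L U t - saturatedMean L U s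
  have hsq : D ^ 2 ≤ D * (t - s) :=
    sq_sub_le_mul_sub (saturatedMean_monotone hLU) (id_sub_saturatedMean_monotone L U) s t
  have hp := (unsaturatedProb_pos hLU s).le
  simp only [real_inner_smul_left, inner_sub_right, ← mul_sub]
  calc sInf (unsaturatedProb L U '' Set.Icc (-M) M) * D ^ 2
      ≤ unsaturatedProb L U s * D ^ 2 := mul_le_mul_of_nonneg_right hcs (sq_nonneg D)
    _ ≤ unsaturatedProb L U s * (D * (t - s)) := mul_le_mul_of_nonneg_left hsq hp
    _ ≤ -2 * D * unsaturatedProb L U s * (s - t) := by nlinarith [sq_nonneg D]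

theorem stmt4 {d : ℕ} (L U M : ℝ) (hLU : L < U) (G : ℝ → ℝ)
    (hG : ∀ s, G s = U + (L - s) * stdPhi (L - s) - (U - s) * stdPhi (U - s)
        + stdpdf (L - s) - stdpdf (U - s))
    (φk θstar θ : EuclideanSpace ℝ (Fin d))
    (hθ : |⟪φk, θ⟫| ≤ M) (hθstar : |⟪φk, θstar⟫| ≤ M)
    (J : EuclideanSpace ℝ (Fin d) → ℝ)
    (hJ : J = fun ϑ => (G ⟪φk, θstar⟫ - G ⟪φk, ϑ⟫) ^ 2)
    (gradJ : EuclideanSpace ℝ (Fin d) → EuclideanSpace ℝ (Fin d))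
    (hgrad : gradJ = fun ϑ =>
      (-2 * (G ⟪φk, θstar⟫ - G ⟪φk, ϑ⟫) *
        (stdPhi (U - ⟪φk, ϑ⟫) - stdPhi (L - ⟪φk, ϑ⟫))) • φk)
    (c : ℝ)
    (hc : c = sInf ((fun x => stdPhi (U - x) - stdPhi (L - x)) '' Set.Icc (-M) M)) :
    0 < c ∧ ⟪gradJ θ, θ - θstar⟫ ≥ c * J θ :=
  stmt4_general L U M hLU G hG φk θstar θ hθ J hJ gradJ hgrad c hc
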